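/- arXiv:1911.01466 — 2 statements merged into one kernel-verified Lean document; each statement's English description precedes it below -/
import Mathlib

section
/- Let f : ℝ² → ℝ be of class C⁵ near the origin with f_{20} = f_{02} = f_{30} = f_{03} = 0 at the origin (the asymptotic lines at the hyperbonode are the coordinate axes). Define a : ℝ³ → ℝ by a(x, y, p) = f_{20}(x, y) + 2 f_{11}(x, y) p + f_{02}(x, y) p², and I : ℝ³ → ℝ by I(x, y, p) = (∂a/∂x)(x, y, p) + p (∂a/∂y)(x, y, p), and let G = (a, I) : ℝ³ → ℝ². Then every vector (ξ, η, π) in the kernel of the Fréchet derivative of G at (0, 0, 0) satisfies 2 f_{11} f_{40} ξ − (3 f_{21}² − 2 f_{11} f_{31}) η = 0, where f_{ij} denotes the value at the origin. (This is the equation of the tangent line L_{F_r} to the right flecnodal curve at the hyperbonode.) -/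
/-- Partial derivative in the `x` direction. -/
noncomputable def pdx (f : ℝ × ℝ → ℝ) : ℝ × ℝ → ℝ := fun q => fderiv ℝ f q (1, 0)

/-- Partial derivative in the `y` direction. -/
noncomputable def pdy (f : ℝ × ℝ → ℝ) : ℝ × ℝ → ℝ := fun q => fderiv ℝ f q (0, 1)

/-- `pd i j f = ∂^{i+j} f / ∂x^i ∂y^j`. -/
noncomputable def pd (i j : ℕ) (f : ℝ × ℝ → ℝ) : ℝ × ℝ → ℝ := pdx^[i] (pdy^[j] f)

/-!
Both `a` and `I = a_x + p a_y` are polynomials in the fibre coordinate `p` with partial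
derivatives of `f` as coefficients, so at `p = 0` their differentials only see the constant and
linear coefficients: `da = f₃₀ dx + f₂₁ dy + 2 f₁₁ dp` and `dI = f₄₀ dx + f₃₁ dy + 3 f₂₁ dp`,
where symmetry of the mixed partials of the `C⁵` function `f` identifies `∂_y f₂₀` with `f₂₁`
and `∂_y f₃₀` with `f₃₁`. Since `f₃₀ = 0`, eliminating `dp` via `2 f₁₁ dI − 3 f₂₁ da` gives the
equation of the line.
-/

open Filter Topology

section Partials

variable {g : ℝ × ℝ → ℝ} {z : ℝ × ℝ}

lemma fderiv_apply_eq_pdx_pdy (ξ η : ℝ) :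
    fderiv ℝ g z (ξ, η) = ξ * pdx g z + η * pdy g z := by
  have : ((ξ, η) : ℝ × ℝ) = ξ • ((1 : ℝ), (0 : ℝ)) + η • ((0 : ℝ), (1 : ℝ)) := by simp
  rw [this, map_add, map_smul, map_smul, smul_eq_mul, smul_eq_mul, pdx, pdy]

lemma pdx_const_mul (c : ℝ) (hg : DifferentiableAt ℝ g z) :
    pdx (fun q => c * g q) z = c * pdx g z := by
  simp [pdx, fderiv_const_mul hg]

lemma pdx_pd (i j : ℕ) (f : ℝ × ℝ → ℝ) : pdx (pd i j f) = pd (i + 1) j f :=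
  (Function.iterate_succ_apply' pdx i _).symm

lemma pdy_pd_zero (j : ℕ) (f : ℝ × ℝ → ℝ) : pdy (pd 0 j f) = pd 0 (j + 1) f :=
  (Function.iterate_succ_apply' pdy j _).symm

lemma ContDiffAt.pdx {n : ℕ} (hg : ContDiffAt ℝ (n + 1 : ℕ) g z) : ContDiffAt ℝ n (pdx g) z :=
  (hg.fderiv_right (m := n) (by simp)).clm_apply contDiffAt_const

lemma ContDiffAt.pdy {n : ℕ} (hg : ContDiffAt ℝ (n + 1 : ℕ) g z) : ContDiffAt ℝ n (pdy g) z :=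
  (hg.fderiv_right (m := n) (by simp)).clm_apply contDiffAt_const

lemma ContDiffAt.pd {f : ℝ × ℝ → ℝ} {i j n : ℕ} (hf : ContDiffAt ℝ (i + j + n : ℕ) f z) :
    ContDiffAt ℝ n (pd i j f) z := by
  induction i generalizing n with
  | zero =>
    induction j generalizing n with
    | zero => simp only [zero_add] at hf; exact hf
    | succ j ih =>
      rw [← pdy_pd_zero]
      exact ContDiffAt.pdy (ih (by rwa [show 0 + j + (n + 1) = 0 + (j + 1) + n by omega]))
  | succ i ih =>
    rw [← pdx_pd]
    exact ContDiffAt.pdx (ih (by rwa [show i + j + (n + 1) = i + 1 + j + n by omega]))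

lemma pdy_pdx_comm (hg : ContDiffAt ℝ 2 g z) : pdy (pdx g) z = pdx (pdy g) z := by
  have hd : DifferentiableAt ℝ (fderiv ℝ g) z :=
    (hg.fderiv_right (m := 1) (by norm_num)).differentiableAt (by norm_num)
  have hsymm := hg.isSymmSndFDerivAt (by simp)
  change fderiv ℝ (fun q => fderiv ℝ g q (1, 0)) z (0, 1)
    = fderiv ℝ (fun q => fderiv ℝ g q (0, 1)) z (1, 0)
  rw [fderiv_clm_apply hd (differentiableAt_const _),
    fderiv_clm_apply hd (differentiableAt_const _)]
  simpa using hsymm (0, 1) (1, 0)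

lemma pdy_iterate_pdx {i : ℕ} (hg : ContDiffAt ℝ (i + 1 : ℕ) g z) :
    pdy (pdx^[i] g) z = pdx^[i] (pdy g) z := by
  induction i generalizing z with
  | zero => rfl
  | succ i ih =>
    have hnear : ∀ᶠ q in 𝓝 z, ContDiffAt ℝ (i + 1 : ℕ) g q :=
      (hg.of_le (by norm_cast; omega)).eventually (by simp)
    have hcomm : pdy (pdx^[i] g) =ᶠ[𝓝 z] pdx^[i] (pdy g) := hnear.mono fun q hq => ih hq
    rw [Function.iterate_succ_apply', Function.iterate_succ_apply',
      pdy_pdx_comm (g := pdx^[i] g) (ContDiffAt.pd (i := i) (j := 0) (n := 2) hg)]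
    simp only [pdx, hcomm.fderiv_eq]

lemma pdy_pd {f : ℝ × ℝ → ℝ} {i j : ℕ} (hf : ContDiffAt ℝ (i + j + 1 : ℕ) f z) :
    pdy (pd i j f) z = pd i (j + 1) f z := by
  have hpdy : ContDiffAt ℝ (i + 1 : ℕ) (pdy^[j] f) z :=
    ContDiffAt.pd (i := 0) (n := i + 1) (by rwa [show 0 + j + (i + 1) = i + j + 1 by omega])
  rw [pd, pdy_iterate_pdx hpdy, pd, Function.iterate_succ_apply']

end Partials

noncomputable def fibrePoly {n : ℕ} (c : Fin n → ℝ × ℝ → ℝ) (w : ℝ × ℝ × ℝ) : ℝ :=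
  ∑ k, c k (w.1, w.2.1) * w.2.2 ^ (k : ℕ)

section FibrePoly

variable {n : ℕ} {x y p : ℝ}

lemma differentiableAt_fibrePoly {c : Fin n → ℝ × ℝ → ℝ}
    (hc : ∀ k, DifferentiableAt ℝ (c k) (x, y)) :
    DifferentiableAt ℝ (fibrePoly c) (x, y, p) := by
  unfold fibrePoly
  fun_prop

lemma fderiv_fibrePoly_apply {c : Fin n → ℝ × ℝ → ℝ}
    (hc : ∀ k, DifferentiableAt ℝ (c k) (x, y)) (v : ℝ × ℝ × ℝ) :
    fderiv ℝ (fibrePoly c) (x, y, p) v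
      = ∑ k : Fin n, (p ^ (k : ℕ) * fderiv ℝ (c k) (x, y) (v.1, v.2.1)
        + c k (x, y) * ((k : ℕ) * p ^ ((k : ℕ) - 1)) * v.2.2) := by
  have hbase : HasFDerivAt (fun w : ℝ × ℝ × ℝ => (w.1, w.2.1))
      ((ContinuousLinearMap.fst ℝ ℝ (ℝ × ℝ)).prod
        (ContinuousLinearMap.fst ℝ ℝ ℝ ∘L ContinuousLinearMap.snd ℝ ℝ (ℝ × ℝ))) (x, y, p) :=
    hasFDerivAt_fst.prodMk hasFDerivAt_snd.fst
  have h : HasFDerivAt (fibrePoly c) _ (x, y, p) := HasFDerivAt.fun_sum fun k _ =>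
    ((hc k).hasFDerivAt.comp (x, y, p) hbase).mul (hasFDerivAt_snd.snd.pow (k : ℕ))
  rw [h.fderiv]
  simp [mul_assoc, add_comm]

lemma fderiv_fibrePoly_apply_fst {c : Fin n → ℝ × ℝ → ℝ}
    (hc : ∀ k, DifferentiableAt ℝ (c k) (x, y)) :
    fderiv ℝ (fibrePoly c) (x, y, p) (1, 0, 0) = fibrePoly (fun k => pdx (c k)) (x, y, p) := by
  simp [fderiv_fibrePoly_apply hc, fibrePoly, pdx, mul_comm]

lemma fderiv_fibrePoly_apply_snd {c : Fin n → ℝ × ℝ → ℝ}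
    (hc : ∀ k, DifferentiableAt ℝ (c k) (x, y)) :
    fderiv ℝ (fibrePoly c) (x, y, p) (0, 1, 0) = fibrePoly (fun k => pdy (c k)) (x, y, p) := by
  simp [fderiv_fibrePoly_apply hc, fibrePoly, pdy, mul_comm]

lemma fibrePoly_apply_zero (c : Fin (n + 1) → ℝ × ℝ → ℝ) :
    fibrePoly c (x, y, 0) = c 0 (x, y) := by
  simp [fibrePoly, Fin.sum_univ_succ]

lemma fderiv_fibrePoly_zero_apply {c : Fin (n + 2) → ℝ × ℝ → ℝ}
    (hc : ∀ k, DifferentiableAt ℝ (c k) (x, y)) (v : ℝ × ℝ × ℝ) :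
    fderiv ℝ (fibrePoly c) (x, y, 0) v
      = fderiv ℝ (c 0) (x, y) (v.1, v.2.1) + c 1 (x, y) * v.2.2 := by
  simp [fderiv_fibrePoly_apply hc, Fin.sum_univ_succ]

end FibrePoly

/-- The paper's `I = a_x + p a_y`: the derivative along the lift `∂x + p ∂y` of the line field
of slope `p`. -/
noncomputable def totalDeriv (φ : ℝ × ℝ × ℝ → ℝ) (w : ℝ × ℝ × ℝ) : ℝ :=
  fderiv ℝ φ w (1, 0, 0) + w.2.2 * fderiv ℝ φ w (0, 1, 0)

section TotalDeriv

variable {n : ℕ} {x y : ℝ}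

lemma totalDeriv_fibrePoly_eventuallyEq {c : Fin n → ℝ × ℝ → ℝ} (p : ℝ)
    (hc : ∀ᶠ q in 𝓝 (x, y), ∀ k, DifferentiableAt ℝ (c k) q) :
    totalDeriv (fibrePoly c) =ᶠ[𝓝 (x, y, p)]
      fun w => fibrePoly (fun k => pdx (c k)) w + w.2.2 * fibrePoly (fun k => pdy (c k)) w := by
  have hbase : Tendsto (fun w : ℝ × ℝ × ℝ => (w.1, w.2.1)) (𝓝 (x, y, p)) (𝓝 (x, y)) :=
    (continuous_fst.prodMk continuous_snd.fst).tendsto (x, y, p)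
  filter_upwards [hbase.eventually hc] with ⟨x', y', p'⟩ hc'
  rw [totalDeriv, fderiv_fibrePoly_apply_fst hc', fderiv_fibrePoly_apply_snd hc']

lemma differentiableAt_totalDeriv_fibrePoly {c : Fin n → ℝ × ℝ → ℝ} (p : ℝ)
    (hc : ∀ᶠ q in 𝓝 (x, y), ∀ k, DifferentiableAt ℝ (c k) q)
    (hcx : ∀ k, DifferentiableAt ℝ (pdx (c k)) (x, y))
    (hcy : ∀ k, DifferentiableAt ℝ (pdy (c k)) (x, y)) :
    DifferentiableAt ℝ (totalDeriv (fibrePoly c)) (x, y, p) :=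
  ((differentiableAt_fibrePoly hcx).add (differentiableAt_snd.snd.mul
    (differentiableAt_fibrePoly hcy))).congr_of_eventuallyEq
    (totalDeriv_fibrePoly_eventuallyEq p hc)

lemma fderiv_totalDeriv_fibrePoly_zero_apply {c : Fin (n + 2) → ℝ × ℝ → ℝ}
    (hc : ∀ᶠ q in 𝓝 (x, y), ∀ k, DifferentiableAt ℝ (c k) q)
    (hcx : ∀ k, DifferentiableAt ℝ (pdx (c k)) (x, y))
    (hcy : ∀ k, DifferentiableAt ℝ (pdy (c k)) (x, y)) (v : ℝ × ℝ × ℝ) :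
    fderiv ℝ (totalDeriv (fibrePoly c)) (x, y, 0) v
      = fderiv ℝ (pdx (c 0)) (x, y) (v.1, v.2.1)
        + (pdx (c 1) (x, y) + pdy (c 0) (x, y)) * v.2.2 := by
  have hderiv : HasFDerivAt
      (fun w => fibrePoly (fun k => pdx (c k)) w + w.2.2 * fibrePoly (fun k => pdy (c k)) w)
      _ (x, y, 0) :=
    (differentiableAt_fibrePoly hcx).hasFDerivAt.add
      (hasFDerivAt_snd.snd.mul (differentiableAt_fibrePoly hcy).hasFDerivAt)
  rw [(totalDeriv_fibrePoly_eventuallyEq 0 hc).fderiv_eq, hderiv.fderiv]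
  simp only [add_apply, smul_apply,
    ContinuousLinearMap.comp_apply, ContinuousLinearMap.coe_snd', fderiv_fibrePoly_zero_apply hcx,
    fibrePoly_apply_zero, zero_smul, zero_add, smul_eq_mul]
  ring

end TotalDeriv

lemma ker_fderiv_fibrePoly_totalDeriv {n : ℕ} {c : Fin (n + 2) → ℝ × ℝ → ℝ} {x y : ℝ}
    (hc : ∀ᶠ q in 𝓝 (x, y), ∀ k, DifferentiableAt ℝ (c k) q)
    (hcx : ∀ k, DifferentiableAt ℝ (pdx (c k)) (x, y))
    (hcy : ∀ k, DifferentiableAt ℝ (pdy (c k)) (x, y)) {v : ℝ × ℝ × ℝ}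
    (hv : fderiv ℝ (fun w => (fibrePoly c w, totalDeriv (fibrePoly c) w)) (x, y, 0) v = 0) :
    fderiv ℝ (c 0) (x, y) (v.1, v.2.1) + c 1 (x, y) * v.2.2 = 0 ∧
      fderiv ℝ (pdx (c 0)) (x, y) (v.1, v.2.1)
        + (pdx (c 1) (x, y) + pdy (c 0) (x, y)) * v.2.2 = 0 := by
  have hφ : DifferentiableAt ℝ (fibrePoly c) (x, y, 0) :=
    differentiableAt_fibrePoly hc.self_of_nhds
  have hψ := differentiableAt_totalDeriv_fibrePoly 0 hc hcx hcy
  rw [(hφ.hasFDerivAt.prodMk hψ.hasFDerivAt).fderiv] at hv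
  rw [← fderiv_fibrePoly_zero_apply hc.self_of_nhds,
    ← fderiv_totalDeriv_fibrePoly_zero_apply hc hcx hcy]
  simpa [Prod.ext_iff] using hv

theorem tangent_line_right_flecnodal_general (f : ℝ × ℝ → ℝ) (hf : ContDiffAt ℝ 5 f 0)
    (h30 : pd 3 0 f 0 = 0)
    (a : ℝ × ℝ × ℝ → ℝ)
    (ha : ∀ x y p : ℝ,
      a (x, y, p) = pd 2 0 f (x, y) + 2 * pd 1 1 f (x, y) * p + pd 0 2 f (x, y) * p ^ 2)
    (I : ℝ × ℝ × ℝ → ℝ)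
    (hI : ∀ x y p : ℝ,
      I (x, y, p) = fderiv ℝ a (x, y, p) (1, 0, 0) + p * fderiv ℝ a (x, y, p) (0, 1, 0))
    (G : ℝ × ℝ × ℝ → ℝ × ℝ) (hG : ∀ w, G w = (a w, I w))
    (ξ η π' : ℝ) (hker : fderiv ℝ G (0, 0, 0) (ξ, η, π') = 0) :
    2 * pd 1 1 f 0 * pd 4 0 f 0 * ξ
      - (3 * (pd 2 1 f 0) ^ 2 - 2 * pd 1 1 f 0 * pd 3 1 f 0) * η = 0 := by
  set c : Fin 3 → ℝ × ℝ → ℝ := ![pd 2 0 f, fun q => 2 * pd 1 1 f q, pd 0 2 f]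
  have hG' : G = fun w => (fibrePoly c w, totalDeriv (fibrePoly c) w) := by
    have ha' : a = fibrePoly c := funext fun ⟨x, y, p⟩ => by
      simp [ha, fibrePoly, Fin.sum_univ_three, c]
    exact funext fun ⟨x, y, p⟩ => by rw [hG, hI, ha']; rfl
  have hcoeff : ∀ q, ContDiffAt ℝ 5 f q → ∀ k, ContDiffAt ℝ 3 (c k) q := by
    intro q hq k
    fin_cases k
    · exact ContDiffAt.pd (i := 2) (j := 0) hq
    · exact contDiffAt_const.mul (ContDiffAt.pd (i := 1) (j := 1) hq)
    · exact ContDiffAt.pd (i := 0) (j := 2) hq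
  have hc3 : ∀ᶠ q in 𝓝 (0, 0), ∀ k, ContDiffAt ℝ 3 (c k) q :=
    (hf.eventually (by simp)).mono hcoeff
  obtain ⟨eqA, eqI⟩ := ker_fderiv_fibrePoly_totalDeriv
    (hc3.mono fun q hq k => (hq k).differentiableAt (by norm_num))
    (fun k => (ContDiffAt.pdx (n := 2) (hc3.self_of_nhds k)).differentiableAt (by norm_num))
    (fun k => (ContDiffAt.pdy (n := 2) (hc3.self_of_nhds k)).differentiableAt (by norm_num))
    (hG' ▸ hker)
  have h21 : pdy (pd 2 0 f) 0 = pd 2 1 f 0 := pdy_pd (hf.of_le (by norm_num))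
  have h31 : pdy (pd 3 0 f) 0 = pd 3 1 f 0 := pdy_pd (hf.of_le (by norm_num))
  have h21' : pdx (fun q => 2 * pd 1 1 f q) 0 = 2 * pd 2 1 f 0 := by
    rw [pdx_const_mul 2 ((ContDiffAt.pd (i := 1) (j := 1) (n := 3) hf).differentiableAt
      (by norm_num)), pdx_pd]
  simp only [c, fderiv_apply_eq_pdx_pdy, Matrix.cons_val_zero, Matrix.cons_val_one,
    pdx_pd, Prod.mk_zero_zero, h21, h31, h21', h30] at eqA eqI
  linear_combination (2 * pd 1 1 f 0) * eqI - (3 * pd 2 1 f 0) * eqA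

/-- At a hyperbonode with the asymptotic lines as coordinate axes, every vector in the
kernel of the derivative at the origin of `G = (a, I)` satisfies the equation of the
tangent line `L_{F_r}` to the right flecnodal curve:
`2 f₁₁ f₄₀ ξ − (3 f₂₁² − 2 f₁₁ f₃₁) η = 0`. -/
theorem tangent_line_right_flecnodal (f : ℝ × ℝ → ℝ) (hf : ContDiffAt ℝ 5 f 0)
    (h20 : pd 2 0 f 0 = 0) (h02 : pd 0 2 f 0 = 0)
    (h30 : pd 3 0 f 0 = 0) (h03 : pd 0 3 f 0 = 0)
    (a : ℝ × ℝ × ℝ → ℝ)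
    (ha : ∀ x y p : ℝ,
      a (x, y, p) = pd 2 0 f (x, y) + 2 * pd 1 1 f (x, y) * p + pd 0 2 f (x, y) * p ^ 2)
    (I : ℝ × ℝ × ℝ → ℝ)
    (hI : ∀ x y p : ℝ,
      I (x, y, p) = fderiv ℝ a (x, y, p) (1, 0, 0) + p * fderiv ℝ a (x, y, p) (0, 1, 0))
    (G : ℝ × ℝ × ℝ → ℝ × ℝ) (hG : ∀ w, G w = (a w, I w))
    (ξ η π' : ℝ) (hker : fderiv ℝ G (0, 0, 0) (ξ, η, π') = 0) :
    2 * pd 1 1 f 0 * pd 4 0 f 0 * ξ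
      - (3 * (pd 2 1 f 0) ^ 2 - 2 * pd 1 1 f 0 * pd 3 1 f 0) * η = 0 :=
  tangent_line_right_flecnodal_general f hf h30 a ha I hI G hG ξ η π' hker
end

section
/- Let f_{40}, f_{31}, f_{22}, f_{13}, f_{04} be real numbers and define the complex numbers a = (f_{40} − 3 f_{22}) + i(3 f_{31} − f_{13}) and b = (f_{31} − 3 f_{13}) − i(f_{04} − 3 f_{22}). Assume b·i − a ≠ 0 and a + i·b ≠ 0 (equivalently, (f_{40} − 6 f_{22} + f_{04})² + 16 (f_{31} − f_{13})² ≠ 0). Set x_F = 2 i b/(b i − a) and x_{F̄} = 2 i b̄/(b̄ i − ā), where z̄ denotes complex conjugation. Then x_F ≠ 1 and (x_F − x_{F̄}) / (x_F − 1) = 4 [ (f_{40} − 3 f_{22})(f_{04} − 3 f_{22}) − (f_{31} − 3 f_{13})(f_{13} − 3 f_{31}) ] / [ (f_{40} − 6 f_{22} + f_{04})² + 16 (f_{31} − f_{13})² ]; in particular this complex number is real. -/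
/-!
Writing `w = a + i b`, one has `x_F - 1 = w / (b i - a)` and `b̄ i - ā = -w̄`, while the numerator
`x_F - x_{F̄}` collapses to `2 i (a b̄ - ā b) / ((b i - a)(b̄ i - ā))`. Hence the cross-ratio is
`4 Im(a b̄) / |w|²`, which is real; for the ellipnode, `w = (f₄₀ - 6f₂₂ + f₀₄) + 4i(f₃₁ - f₁₃)`.
-/

open Complex ComplexConjugate

theorem two_I_mul_div_sub_one {a b : ℂ} (hd : b * I - a ≠ 0) :
    2 * I * b / (b * I - a) - 1 = (a + I * b) / (b * I - a) := by
  rw [div_sub_one hd]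
  ring

theorem conj_mul_I_sub_conj (a b : ℂ) : conj b * I - conj a = -conj (a + I * b) := by
  simp only [map_add, map_mul, conj_I]
  ring

theorem normSq_add_I_mul (a b : ℂ) :
    (normSq (a + I * b) : ℂ) = -((a + I * b) * (conj b * I - conj a)) := by
  rw [conj_mul_I_sub_conj, mul_neg, neg_neg, mul_conj]

theorem ofReal_im_mul_two_I (z : ℂ) : (z.im : ℂ) * (2 * I) = z - conj z := by
  rw [sub_conj]
  push_cast
  ring

theorem cross_ratio_eq_im_div_normSq {a b : ℂ} (hd : b * I - a ≠ 0) (hw : a + I * b ≠ 0) :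
    (2 * I * b / (b * I - a) - 2 * I * conj b / (conj b * I - conj a)) /
        (2 * I * b / (b * I - a) - 1) =
      ((4 * (a * conj b).im / normSq (a + I * b) : ℝ) : ℂ) := by
  have hd' : conj b * I - conj a ≠ 0 := by
    rw [conj_mul_I_sub_conj, neg_ne_zero]
    exact (map_ne_zero _).mpr hw
  have him : ((a * conj b).im : ℂ) * (2 * I) = a * conj b - conj a * b := by
    rw [ofReal_im_mul_two_I, map_mul, conj_conj]
  rw [two_I_mul_div_sub_one hd]
  push_cast
  rw [normSq_add_I_mul]
  -- `field_simp` normalises `b * I` to `I * b` and only then looks for nonvanishing hypotheses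
  rw [mul_comm b I] at hd ⊢
  rw [mul_comm (conj b) I] at hd' ⊢
  field_simp
  linear_combination (-2 * I) * him + 4 * ((a * conj b).im : ℂ) * I_sq

theorem im_mul_conj_sub_I_mul (A B C D : ℝ) :
    ((A + I * B) * conj (C - I * D)).im = A * D + B * C := by
  simp [mul_comm]

theorem normSq_add_I_mul_sub_I_mul (A B C D : ℝ) :
    normSq ((A + I * B) + I * (C - I * D)) = (A + D) ^ 2 + (B + C) ^ 2 := by
  simp [normSq_apply]
  ring

open Complex in
/-- The computation proving Theorem 6 of the paper: the cross-ratio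
`(x_F − x_{F̄})/(x_F − 1)` of the intersections of the tangent lines to the complex
conjugate flecnodal curves and asymptotic lines at an ellipnode is the real number
`4[(f₄₀−3f₂₂)(f₀₄−3f₂₂) − (f₃₁−3f₁₃)(f₁₃−3f₃₁)] / [(f₄₀−6f₂₂+f₀₄)² + 16(f₃₁−f₁₃)²]`. -/
theorem cr_invariant_ellipnode (f40 f31 f22 f13 f04 : ℝ)
    (a b : ℂ)
    (ha : a = ((f40 - 3 * f22 : ℝ) : ℂ) + Complex.I * ((3 * f31 - f13 : ℝ) : ℂ))
    (hb : b = ((f31 - 3 * f13 : ℝ) : ℂ) - Complex.I * ((f04 - 3 * f22 : ℝ) : ℂ))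
    (h1 : b * Complex.I - a ≠ 0) (h2 : a + Complex.I * b ≠ 0)
    (xF xFbar : ℂ)
    (hxF : xF = 2 * Complex.I * b / (b * Complex.I - a))
    (hxFbar : xFbar =
      2 * Complex.I * (starRingEnd ℂ b) /
        ((starRingEnd ℂ b) * Complex.I - starRingEnd ℂ a)) :
    xF ≠ 1 ∧
      (xF - xFbar) / (xF - 1) =
        ((4 * ((f40 - 3 * f22) * (f04 - 3 * f22) - (f31 - 3 * f13) * (f13 - 3 * f31)) /
          ((f40 - 6 * f22 + f04) ^ 2 + 16 * (f31 - f13) ^ 2) : ℝ) : ℂ) := by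
  subst hxF hxFbar
  constructor
  · rw [Ne, ← sub_eq_zero, two_I_mul_div_sub_one h1]
    exact div_ne_zero h2 h1
  · rw [cross_ratio_eq_im_div_normSq h1 h2, ha, hb, im_mul_conj_sub_I_mul,
      normSq_add_I_mul_sub_I_mul]
    congr 2 <;> ring
end
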